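/- arXiv:0905.0567 — 6 statements merged into one kernel-verified Lean document; each statement's English description precedes it below -/
import Mathlib

section
/- If a tournament T factorizes as T = S_1 + ... + S_r into strong subtournaments (where every vertex of S_k beats every vertex of S_l for k < l), then the number of minimal feedback vertex sets of T equals the product of the numbers of minimal feedback vertex sets of the S_i. -/
/-- A set `W` of vertices is acyclic if the digraph `r` restricted to `W`
has no directed cycle (the transitive closure restricted to `W` is irreflexive). -/
def AcyclicOn {V : Type*} (r : V → V → Prop) (W : Set V) : Prop :=
  ∀ v : V, ¬ Relation.TransGen (fun a b => a ∈ W ∧ b ∈ W ∧ r a b) v v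

/-- A tournament: an irreflexive relation with exactly one arc between
every pair of distinct vertices. -/
def IsTournament {V : Type*} (r : V → V → Prop) : Prop :=
  (∀ v : V, ¬ r v v) ∧ ∀ u v : V, u ≠ v → (r u v ↔ ¬ r v u)

/-- A feedback vertex set: its deletion leaves an acyclic digraph. -/
def IsFVS {V : Type*} (r : V → V → Prop) (F : Set V) : Prop :=
  AcyclicOn r Fᶜ

/-- A minimal feedback vertex set. -/
def IsMinimalFVS {V : Type*} (r : V → V → Prop) (F : Set V) : Prop :=
  IsFVS r F ∧ ∀ F' : Set V, F' ⊆ F → IsFVS r F' → F' = F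

/-- A feedback vertex set of the subtournament induced on `S`. -/
def IsFVSOn {V : Type*} (r : V → V → Prop) (S F : Set V) : Prop :=
  F ⊆ S ∧ AcyclicOn r (S \ F)

/-- A minimal feedback vertex set of the subtournament induced on `S`. -/
def IsMinimalFVSOn {V : Type*} (r : V → V → Prop) (S F : Set V) : Prop :=
  IsFVSOn r S F ∧ ∀ F' : Set V, F' ⊆ F → IsFVSOn r S F' → F' = F

/-- Strong (strongly connected): a directed path between any ordered pair. -/
def IsStrong {V : Type*} (r : V → V → Prop) : Prop :=
  ∀ u v : V, Relation.ReflTransGen r u v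

/-- The subtournament induced on `S` is strong. -/
def IsStrongOn {V : Type*} (r : V → V → Prop) (S : Set V) : Prop :=
  ∀ u ∈ S, ∀ v ∈ S, Relation.ReflTransGen (fun a b => a ∈ S ∧ b ∈ S ∧ r a b) u v

/-- The score (out-degree) of a vertex. -/
noncomputable def outScore {V : Type*} (r : V → V → Prop) (v : V) : ℕ :=
  {u : V | r v u}.ncard

/-- The number of minimal feedback vertex sets of a tournament. -/
noncomputable def fvsCount (V : Type*) (r : V → V → Prop) : ℕ :=
  {F : Set V | IsMinimalFVS r F}.ncard

/-- `maxMinFVS n` = maximum number of minimal FVSs over all `n`-vertex tournaments. -/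
noncomputable def maxMinFVS (n : ℕ) : ℕ :=
  sSup {k : ℕ | ∃ r : Fin n → Fin n → Prop, IsTournament r ∧ fvsCount (Fin n) r = k}


/-! Since all arcs between distinct factors point forward, every directed cycle of `T` stays
inside a single factor. Hence `F` is a feedback vertex set of `T` exactly when each `F ∩ S_i`
is one of `S_i`, and since the subsets of `V` are the products of their traces on the factors,
minimality also splits factorwise: `F ↦ (F ∩ S_i)_i` is a bijection between minimal feedback
vertex sets of `T` and families of minimal feedback vertex sets of the factors. -/

open Set Relation

theorem Relation.TransGen.le_of_map_le {V ι : Type*} [Preorder ι] {R : V → V → Prop}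
    {f : V → ι} (hf : ∀ a b, R a b → f a ≤ f b) {a b : V} (h : TransGen R a b) : f a ≤ f b := by
  simpa only [transGen_eq_self] using h.lift f hf

theorem AcyclicOn.mono {V : Type*} {r : V → V → Prop} {W W' : Set V} (h : AcyclicOn r W)
    (hW : W' ⊆ W) : AcyclicOn r W' :=
  fun v hv => h v (TransGen.mono (fun _ _ hab => ⟨hW hab.1, hW hab.2.1, hab.2.2⟩) v v hv)

section Layered

variable {V ι : Type*} {r : V → V → Prop} {f : V → ι}

theorem transGen_inter_fiber [PartialOrder ι] (hf : ∀ a b, r a b → f a ≤ f b) {W : Set V}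
    {a b : V} (h : TransGen (fun x y => x ∈ W ∧ y ∈ W ∧ r x y) a b) (hba : f b ≤ f a) :
    TransGen (fun x y => x ∈ W ∩ f ⁻¹' {f a} ∧ y ∈ W ∩ f ⁻¹' {f a} ∧ r x y) a b := by
  induction h with
  | single hab => exact .single ⟨⟨hab.1, rfl⟩, ⟨hab.2.1, (hf _ _ hab.2.2).antisymm' hba⟩, hab.2.2⟩
  | @tail c d hac hcd ih =>
    have hac_le : f a ≤ f c := hac.le_of_map_le fun _ _ h => hf _ _ h.2.2
    have hcd_le : f c ≤ f d := hf _ _ hcd.2.2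
    have hc : f c = f a := (hcd_le.trans hba).antisymm hac_le
    have hd : f d = f a := hba.antisymm (hac_le.trans hcd_le)
    exact (ih hc.le).tail ⟨⟨hcd.1, hc⟩, ⟨hcd.2.1, hd⟩, hcd.2.2⟩

theorem acyclicOn_iff_forall_inter_fiber [PartialOrder ι] (hf : ∀ a b, r a b → f a ≤ f b)
    (W : Set V) : AcyclicOn r W ↔ ∀ i, AcyclicOn r (W ∩ f ⁻¹' {i}) :=
  ⟨fun h _ => h.mono inter_subset_left,
    fun h v hv => h (f v) v (transGen_inter_fiber hf hv le_rfl)⟩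

theorem isFVS_iff_forall_isFVSOn_fiber [PartialOrder ι] (hf : ∀ a b, r a b → f a ≤ f b)
    (F : Set V) : IsFVS r F ↔ ∀ i, IsFVSOn r (f ⁻¹' {i}) (F ∩ f ⁻¹' {i}) := by
  have hdiff (i : ι) : f ⁻¹' {i} \ (F ∩ f ⁻¹' {i}) = Fᶜ ∩ f ⁻¹' {i} := by
    ext; simp [and_comm]
  simp only [IsFVS, IsFVSOn, inter_subset_right, true_and, hdiff]
  exact acyclicOn_iff_forall_inter_fiber hf Fᶜ

theorem eq_of_forall_inter_fiber_eq {F G : Set V} (h : ∀ i, F ∩ f ⁻¹' {i} = G ∩ f ⁻¹' {i}) :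
    F = G := by
  ext x
  simpa using congr(x ∈ $(h (f x)))

theorem iUnion_inter_fiber_of_subset {G : ι → Set V} (hG : ∀ i, G i ⊆ f ⁻¹' {i}) (i : ι) :
    (⋃ j, G j) ∩ f ⁻¹' {i} = G i := by
  ext x
  simp only [mem_inter_iff, mem_iUnion, mem_preimage, mem_singleton_iff]
  constructor
  · rintro ⟨⟨j, hx⟩, rfl⟩
    rwa [show f x = j from hG j hx]
  · exact fun hx => ⟨⟨i, hx⟩, hG i hx⟩

theorem isMinimalFVS_iff_forall_fiber [PartialOrder ι] (hf : ∀ a b, r a b → f a ≤ f b)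
    (F : Set V) :
    IsMinimalFVS r F ↔ ∀ i, IsMinimalFVSOn r (f ⁻¹' {i}) (F ∩ f ⁻¹' {i}) := by
  classical
  simp only [IsMinimalFVS, IsMinimalFVSOn, isFVS_iff_forall_isFVSOn_fiber hf]
  constructor
  · rintro ⟨hF, hmin⟩ i
    refine ⟨hF i, fun F' hF'F hF' => ?_⟩
    let G := Function.update (fun j => F ∩ f ⁻¹' {j}) i F'
    have hG : ∀ j, G j ⊆ F ∩ f ⁻¹' {j} ∧ IsFVSOn r (f ⁻¹' {j}) (G j) :=
      (Function.forall_update_iff _ fun j G' => G' ⊆ F ∩ f ⁻¹' {j} ∧ IsFVSOn r (f ⁻¹' {j}) G').2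
        ⟨⟨hF'F, hF'⟩, fun j _ => ⟨subset_rfl, hF j⟩⟩
    have htrace := iUnion_inter_fiber_of_subset fun j => (hG j).1.trans inter_subset_right
    have hGF : ⋃ j, G j = F :=
      hmin _ (iUnion_subset fun j => (hG j).1.trans inter_subset_left) fun j => htrace j ▸ (hG j).2
    calc F' = G i := by simp [G]
      _ = F ∩ f ⁻¹' {i} := by rw [← htrace i, hGF]
  · intro h
    refine ⟨fun i => (h i).1, fun F' hF'F hF' => eq_of_forall_inter_fiber_eq (f := f) fun i => ?_⟩
    exact (h i).2 _ (inter_subset_inter_left _ hF'F) (hF' i)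

end Layered

def equivPiOfForallInterFiber {V ι : Type*} {f : V → ι} {P : Set V → Prop}
    {Q : ι → Set V → Prop} (hQ : ∀ i G, Q i G → G ⊆ f ⁻¹' {i})
    (hP : ∀ F, P F ↔ ∀ i, Q i (F ∩ f ⁻¹' {i})) :
    {F // P F} ≃ ∀ i, {G // Q i G} where
  toFun F i := ⟨F.1 ∩ f ⁻¹' {i}, (hP F.1).1 F.2 i⟩
  invFun G := ⟨⋃ i, (G i).1, (hP _).2 fun i => by
    rw [iUnion_inter_fiber_of_subset fun j => hQ j _ (G j).2]; exact (G i).2⟩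
  left_inv F := Subtype.ext <| eq_of_forall_inter_fiber_eq fun i =>
    iUnion_inter_fiber_of_subset (fun j => inter_subset_right) i
  right_inv G := funext fun i => Subtype.ext <|
    iUnion_inter_fiber_of_subset (fun j => hQ j _ (G j).2) i

theorem ncard_eq_prod_of_forall_inter_fiber {V ι : Type*} [Fintype ι] {f : V → ι}
    {P : Set V → Prop} {Q : ι → Set V → Prop} (hQ : ∀ i G, Q i G → G ⊆ f ⁻¹' {i})
    (hP : ∀ F, P F ↔ ∀ i, Q i (F ∩ f ⁻¹' {i})) :
    {F | P F}.ncard = ∏ i, {G | Q i G}.ncard := by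
  simp only [← Nat.card_coe_set_eq, coe_ofPred]
  rw [Nat.card_congr (equivPiOfForallInterFiber hQ hP), Nat.card_pi]

theorem stmt0_general {V : Type*} (r : V → V → Prop) (hT : IsTournament r)
    (m : ℕ) (S : Fin m → Set V)
    (hpart : ∀ v : V, ∃! i : Fin m, v ∈ S i)
    (hbeats : ∀ i j : Fin m, i < j → ∀ u ∈ S i, ∀ v ∈ S j, r u v) :
    {F : Set V | IsMinimalFVS r F}.ncard
      = ∏ i : Fin m, {F : Set V | IsMinimalFVSOn r (S i) F}.ncard := by
  choose idx hmem huniq using hpart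
  obtain rfl : S = fun i => idx ⁻¹' {i} :=
    funext fun i => ext fun v => ⟨fun h => (huniq v i h).symm, fun h => h ▸ hmem v⟩
  have hforward (a b : V) (hab : r a b) : idx a ≤ idx b := by
    refine le_of_not_gt fun hba => ?_
    have hne : b ≠ a := fun h => (h ▸ hba).false
    exact (hT.2 b a hne).1 (hbeats _ _ hba b rfl a rfl) hab
  exact ncard_eq_prod_of_forall_inter_fiber (fun _ _ hG => hG.1.1)
    (isMinimalFVS_iff_forall_fiber hforward)

/-- If a tournament factorizes as `T = S_1 + ... + S_r` into strong subtournaments,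
where every vertex of `S_i` beats every vertex of `S_j` for `i < j`, then the number of
minimal FVSs of `T` is the product of the numbers of minimal FVSs of the factors. -/
theorem stmt0 {V : Type*} [Fintype V] (r : V → V → Prop) (hT : IsTournament r)
    (m : ℕ) (S : Fin m → Set V)
    (hpart : ∀ v : V, ∃! i : Fin m, v ∈ S i)
    (hstrong : ∀ i : Fin m, IsStrongOn r (S i))
    (hbeats : ∀ i j : Fin m, i < j → ∀ u ∈ S i, ∀ v ∈ S j, r u v) :
    {F : Set V | IsMinimalFVS r F}.ncard
      = ∏ i : Fin m, {F : Set V | IsMinimalFVSOn r (S i) F}.ncard :=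
  stmt0_general r hT m S hpart hbeats
end

section
/- Every strong tournament on at least 3 vertices has at least 3 distinct minimal feedback vertex sets. -/
/-
Complements of maximal acyclic vertex sets are minimal feedback vertex sets, and in a finite
digraph every acyclic set extends to a maximal one. In a strong tournament with at least two vertices the
whole vertex set is not acyclic, while singletons and pairs are. So take a maximal acyclic `W₁`,
a vertex `v ∉ W₁`, a maximal acyclic `W₂ ∋ v`, a vertex `u ∉ W₂`, and a maximal acyclic
`W₃ ⊇ {u, v}`: these three sets are pairwise distinct.
-/

section AcyclicOn

variable {V : Type*} {r : V → V → Prop}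

lemma isMinimalFVS_compl_of_maximal {W : Set V} (hW : Maximal (AcyclicOn r) W) :
    IsMinimalFVS r Wᶜ := by
  refine ⟨by rw [IsFVS, compl_compl]; exact hW.1, fun F hF hFfvs => ?_⟩
  rw [← compl_compl F, hW.eq_of_ge hFfvs (Set.subset_compl_comm.mp hF)]

lemma acyclicOn_pair (hr : ∀ a b, r a b → ¬ r b a) (u v : V) : AcyclicOn r {u, v} := by
  intro w
  let s := fun a b => a ∈ ({u, v} : Set V) ∧ b ∈ ({u, v} : Set V) ∧ r a b
  have : IsTrans V s := by
    refine ⟨fun a b c ⟨ha, hb, hab⟩ ⟨_, hc, hbc⟩ => ?_⟩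
    have hab' : a ≠ b := fun h => hr a a (h ▸ hab) (h ▸ hab)
    have hbc' : b ≠ c := fun h => hr b b (h ▸ hbc) (h ▸ hbc)
    have hac : a = c := by
      rcases ha with rfl | rfl <;> rcases hb with rfl | rfl <;> rcases hc with rfl | rfl <;>
        simp_all
    exact absurd (hac ▸ hbc) (hr a b hab)
  rw [Relation.transGen_eq_self (r := s)]
  exact fun ⟨_, _, h⟩ => hr w w h h

lemma not_acyclicOn_univ_of_isStrong (hS : IsStrong r) {a b : V} (hab : r a b) :
    ¬ AcyclicOn r Set.univ :=
  fun h => h a <| .head' ⟨trivial, trivial, hab⟩ <|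
    Relation.ReflTransGen.mono (fun _ _ hxy => ⟨trivial, trivial, hxy⟩) _ _ (hS b a)

end AcyclicOn

namespace IsTournament

variable {V : Type*} {r : V → V → Prop}

lemma asymm (hT : IsTournament r) (a b : V) (hab : r a b) : ¬ r b a := by
  by_cases h : a = b
  · exact absurd (h ▸ hab) (hT.1 b)
  · exact (hT.2 a b h).mp hab

lemma exists_notMem_of_acyclicOn (hT : IsTournament r) (hS : IsStrong r) {u v : V} (huv : u ≠ v)
    {W : Set V} (hW : AcyclicOn r W) : ∃ x, x ∉ W := by
  by_contra! hall
  rw [Set.eq_univ_of_forall hall] at hW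
  by_cases h : r u v
  · exact not_acyclicOn_univ_of_isStrong hS h hW
  · exact not_acyclicOn_univ_of_isStrong hS (not_not.mp ((hT.2 u v huv).not.mp h)) hW

end IsTournament

/-- Every strong tournament on at least 3 vertices has at least 3 minimal FVSs. -/
theorem stmt1 {V : Type*} [Fintype V] (r : V → V → Prop)
    (hT : IsTournament r) (hS : IsStrong r) (hn : 3 ≤ Fintype.card V) :
    3 ≤ {F : Set V | IsMinimalFVS r F}.ncard := by
  obtain ⟨a, b, hab⟩ := Fintype.exists_pair_of_one_lt_card (by omega : 1 < Fintype.card V)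
  have hpair := acyclicOn_pair hT.asymm
  obtain ⟨W₁, -, hW₁⟩ := Finite.exists_le_maximal (p := AcyclicOn r) (hpair a a)
  obtain ⟨v, hv⟩ := hT.exists_notMem_of_acyclicOn hS hab hW₁.1
  obtain ⟨W₂, hvW₂, hW₂⟩ := Finite.exists_le_maximal (p := AcyclicOn r) (hpair v v)
  obtain ⟨u, hu⟩ := hT.exists_notMem_of_acyclicOn hS hab hW₂.1
  obtain ⟨W₃, huvW₃, hW₃⟩ := Finite.exists_le_maximal (p := AcyclicOn r) (hpair u v)
  have hvW₂ : v ∈ W₂ := hvW₂ (.inl rfl)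
  have huW₃ : u ∈ W₃ := huvW₃ (.inl rfl)
  have hvW₃ : v ∈ W₃ := huvW₃ (.inr rfl)
  refine (Set.two_lt_ncard_iff).mpr ⟨W₁ᶜ, W₂ᶜ, W₃ᶜ, isMinimalFVS_compl_of_maximal hW₁,
    isMinimalFVS_compl_of_maximal hW₂, isMinimalFVS_compl_of_maximal hW₃, ?_, ?_, ?_⟩ <;>
    refine compl_injective.ne fun h => ?_
  · exact hv (h ▸ hvW₂)
  · exact hv (h ▸ hvW₃)
  · exact hu (h ▸ huW₃)
end

section
/- For every n ≥ 3 there exists a strong tournament on n vertices with exactly 3 minimal feedback vertex sets. -/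
/-!
Split the vertices into three nonempty blocks, order each block transitively, and let every
vertex of block `i` beat every vertex of block `i + 1 (mod 3)`. Deleting a whole block leaves two
transitive blocks with all arcs between them pointing one way, hence an acyclic tournament; if a
vertex survives in each block, those three vertices form a directed triangle. So the feedback vertex
sets are exactly the supersets of a block, and the minimal ones are the three blocks themselves.
The theorem uses the blocks `{0, …, n - 3}`, `{n - 2}` and `{n - 1}` of `Fin n`.
-/

open Function

/-- The directed triangle in which each vertex is replaced by the transitive tournament on the
block `part ⁻¹' {i}`, ordered by `<`. -/
def cyclicBlowup {V : Type*} [LinearOrder V] (part : V → ZMod 3) (a b : V) : Prop :=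
  (part a = part b ∧ a < b) ∨ part b = part a + 1

theorem acyclicOn_of_rank {V α : Type*} [Preorder α] {r : V → V → Prop} {S : Set V}
    (f : V → α) (hf : ∀ a ∈ S, ∀ b ∈ S, r a b → f a < f b) : AcyclicOn r S := by
  have rank_lt : ∀ {x y}, Relation.TransGen (fun a b => a ∈ S ∧ b ∈ S ∧ r a b) x y →
      f x < f y := by
    intro x y h
    induction h with
    | single hab => exact hf _ hab.1 _ hab.2.1 hab.2.2
    | tail _ hbc ih => exact ih.trans (hf _ hbc.1 _ hbc.2.1 hbc.2.2)
  exact fun v hv => lt_irrefl _ (rank_lt hv)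

theorem setOf_isMinimalFVS_eq_range {V ι : Type*} {r : V → V → Prop} (B : ι → Set V)
    (hB : ∀ i j, B i ⊆ B j → i = j) (hfvs : ∀ F, IsFVS r F ↔ ∃ i, B i ⊆ F) :
    {F | IsMinimalFVS r F} = Set.range B := by
  ext F
  constructor
  · rintro ⟨hF, hmin⟩
    obtain ⟨i, hi⟩ := (hfvs F).1 hF
    exact ⟨i, hmin _ hi ((hfvs _).2 ⟨i, subset_rfl⟩)⟩
  · rintro ⟨i, rfl⟩
    refine ⟨(hfvs _).2 ⟨i, subset_rfl⟩, fun F' hF'i hF' => ?_⟩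
    obtain ⟨j, hj⟩ := (hfvs F').1 hF'
    obtain rfl := hB j i (hj.trans hF'i)
    exact hF'i.antisymm hj

namespace cyclicBlowup

variable {V : Type*} [LinearOrder V] {part : V → ZMod 3}

theorem isTournament : IsTournament (cyclicBlowup part) := by
  have succ_ne : ∀ x : ZMod 3, x ≠ x + 1 := by decide
  have succ_asymm : ∀ x y : ZMod 3, x ≠ y → (y = x + 1 ↔ ¬ x = y + 1) := by decide
  refine ⟨fun v => ?_, fun u v huv => ?_⟩
  · simp [cyclicBlowup, succ_ne]
  · by_cases h : part u = part v
    · simpa [cyclicBlowup, h, succ_ne] using lt_iff_le_and_ne.trans (and_iff_left huv)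
    · simpa [cyclicBlowup, h, Ne.symm h] using succ_asymm _ _ h

theorem reflTransGen_of_part_eq_add (hpart : Surjective part) (a : V) :
    ∀ (k : ℕ) (b : V), part b = part a + ((k + 1 : ℕ) : ZMod 3) →
      Relation.ReflTransGen (cyclicBlowup part) a b
  | 0, b, hb => .single (Or.inr (by simpa using hb))
  | k + 1, b, hb => by
    obtain ⟨c, hc⟩ := hpart (part a + ((k + 1 : ℕ) : ZMod 3))
    refine (reflTransGen_of_part_eq_add hpart a k c hc).tail (Or.inr ?_)
    rw [hb, hc]
    push_cast
    ring

theorem isStrong (hpart : Surjective part) : IsStrong (cyclicBlowup part) := by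
  intro a b
  refine reflTransGen_of_part_eq_add hpart a (part b - part a - 1).val b ?_
  rw [Nat.cast_add, ZMod.natCast_zmod_val]
  ring

theorem isFVS_iff (F : Set V) : IsFVS (cyclicBlowup part) F ↔ ∃ i, part ⁻¹' {i} ⊆ F := by
  constructor
  · intro hF
    by_contra! hblocks
    choose w hw hwF using fun i => Set.not_subset.1 (hblocks i)
    simp only [Set.mem_preimage, Set.mem_singleton_iff] at hw
    have arc : ∀ i j, j = i + 1 → w i ∈ Fᶜ ∧ w j ∈ Fᶜ ∧ cyclicBlowup part (w i) (w j) :=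
      fun i j hij => ⟨hwF i, hwF j, Or.inr (by rw [hw, hw, hij])⟩
    exact hF (w 0) (.tail (.tail (.single (arc 0 1 rfl)) (arc 1 2 rfl)) (arc 2 0 rfl))
  · rintro ⟨i, hi⟩
    -- Outside block `i`, the blocks `i + 1` and `i + 2` come in this order.
    have succ_lt : ∀ x y : ZMod 3, x ≠ i → y ≠ i → y = x + 1 → (x - i).val < (y - i).val := by
      clear hi; revert i; decide
    have not_mem : ∀ v ∈ Fᶜ, part v ≠ i := fun v hv hvi => hv (hi hvi)
    refine acyclicOn_of_rank (fun v => toLex ((part v - i).val, v)) fun a ha b hb hab => ?_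
    rw [Prod.Lex.toLex_lt_toLex]
    rcases hab with ⟨hsame, hlt⟩ | hsucc
    · exact Or.inr ⟨by rw [hsame], hlt⟩
    · exact Or.inl (succ_lt _ _ (not_mem a ha) (not_mem b hb) hsucc)

theorem ncard_setOf_isMinimalFVS (hpart : Surjective part) :
    {F | IsMinimalFVS (cyclicBlowup part) F}.ncard = 3 := by
  have blocks_antichain : ∀ i j, part ⁻¹' {i} ⊆ part ⁻¹' {j} → i = j := fun i j hij => by
    obtain ⟨v, rfl⟩ := hpart i
    exact hij rfl
  rw [setOf_isMinimalFVS_eq_range _ blocks_antichain isFVS_iff,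
    Set.ncard_range_of_injective fun i j h => blocks_antichain i j h.le, Nat.card_zmod]

end cyclicBlowup

def threeBlocks (n : ℕ) (v : Fin n) : ZMod 3 :=
  if v.val < n - 2 then 0 else if v.val = n - 2 then 1 else 2

theorem threeBlocks_surjective {n : ℕ} (hn : 3 ≤ n) : Surjective (threeBlocks n) := by
  intro i
  fin_cases i
  · exact ⟨⟨0, by omega⟩, if_pos (by simp only; omega)⟩
  · exact ⟨⟨n - 2, by omega⟩, (if_neg (by simp)).trans (if_pos rfl)⟩
  · exact ⟨⟨n - 1, by omega⟩, (if_neg (by simp only; omega)).trans (if_neg (by simp only; omega))⟩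

/-- For every `n ≥ 3` there is a strong tournament on `n` vertices with
exactly 3 minimal feedback vertex sets. -/
theorem stmt2 (n : ℕ) (hn : 3 ≤ n) :
    ∃ r : Fin n → Fin n → Prop, IsTournament r ∧ IsStrong r ∧
      {F : Set (Fin n) | IsMinimalFVS r F}.ncard = 3 :=
  ⟨cyclicBlowup (threeBlocks n), cyclicBlowup.isTournament,
    cyclicBlowup.isStrong (threeBlocks_surjective hn),
    cyclicBlowup.ncard_setOf_isMinimalFVS (threeBlocks_surjective hn)⟩
end

section
/- For n ≥ 8 and k ∈ {0,1,2}, every strong tournament on n vertices has at most 2(k+1) vertices of out-degree (score) at least n-2-k. -/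
/-! Let `S` be a set of `2k+3` vertices of score at least `n-2-k`. The arcs inside `S` contribute
`C(2k+3, 2)` to the total score of `S`, and the arcs leaving `S` at most `(2k+3)(n-2k-3)`; the sum
of these is exactly `(2k+3)(n-2-k)`. Since `2k+3 < n`, strong connectivity gives an arc entering
`S`, so the second bound is strict and the total score of `S` falls below `(2k+3)(n-2-k)`. -/

open Finset

section

variable {V : Type*} {r : V → V → Prop}

theorem outScore_eq_card_filter [Fintype V] [DecidableRel r] (v : V) :
    outScore r v = #{u | r v u} := by
  rw [outScore, ← Set.ncard_coe_finset, coe_filter_univ]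

namespace IsTournament

theorem card_filter_add_card_filter_swap [DecidableEq V] [DecidableRel r] (hT : IsTournament r)
    {S : Finset V} {v : V} (hv : v ∈ S) :
    #{u ∈ S | r v u} + #{u ∈ S | r u v} = #S - 1 := by
  rw [← card_erase_of_mem hv, ← card_filter_add_card_filter_not (s := S.erase v) (r v)]
  congr 1
  · rw [filter_erase, erase_eq_of_notMem (by simp [hT.1 v])]
  · calc #{u ∈ S | r u v} = #{u ∈ S.erase v | r u v} := by
          rw [filter_erase, erase_eq_of_notMem (by simp [hT.1 v])]
      _ = _ := congrArg card (filter_congr fun u hu => ?_)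
    exact hT.2 u v (ne_of_mem_erase hu)

theorem sum_card_filter_eq_choose [DecidableEq V] [DecidableRel r] (hT : IsTournament r)
    (S : Finset V) :
    ∑ v ∈ S, #{u ∈ S | r v u} = (#S).choose 2 := by
  have hswap : ∑ v ∈ S, #{u ∈ S | r u v} = ∑ v ∈ S, #{u ∈ S | r v u} :=
    (sum_card_bipartiteAbove_eq_sum_card_bipartiteBelow r).symm
  have htwice : 2 * ∑ v ∈ S, #{u ∈ S | r v u} = #S * (#S - 1) := by
    rw [two_mul]
    nth_rw 2 [← hswap]
    rw [← sum_add_distrib, sum_congr rfl fun v hv => hT.card_filter_add_card_filter_swap hv,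
      sum_const, smul_eq_mul]
  rw [Nat.choose_two_right]
  omega

end IsTournament

theorem IsStrong.exists_arc_into (hS : IsStrong r) {S : Set V} (hS₀ : S.Nonempty)
    (hS₁ : Sᶜ.Nonempty) : ∃ u ∉ S, ∃ v ∈ S, r u v := by
  obtain ⟨v, hv⟩ := hS₀
  obtain ⟨u, hu⟩ := hS₁
  by_contra! hclosed
  suffices ∀ w, Relation.ReflTransGen r u w → w ∉ S from this v (hS u v) hv
  intro w hw
  induction hw with
  | refl => exact hu
  | tail _ hbc ih => exact fun hc => hclosed _ ih _ hc hbc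

variable [Fintype V] [DecidableEq V] [DecidableRel r]

theorem IsStrong.sum_card_filter_compl_lt (hT : IsTournament r) (hS : IsStrong r)
    {S : Finset V} (hS₀ : S.Nonempty) (hS₁ : Sᶜ.Nonempty) :
    ∑ v ∈ S, #{u ∈ Sᶜ | r v u} < #S * #Sᶜ := by
  obtain ⟨u, hu, v, hv, huv⟩ := hS.exists_arc_into hS₀.to_set (coe_compl S ▸ hS₁.to_set)
  have hvu : ¬ r v u := (hT.2 u v fun h => hu (h ▸ hv)).1 huv
  rw [← smul_eq_mul, ← sum_const]
  refine sum_lt_sum (fun w _ => card_filter_le _ _) ⟨v, hv, card_lt_card ?_⟩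
  exact filter_ssubset.2 ⟨u, mem_compl.2 hu, hvu⟩

theorem outScore_eq_card_filter_add_card_filter_compl (S : Finset V) (v : V) :
    outScore r v = #{u ∈ S | r v u} + #{u ∈ Sᶜ | r v u} := by
  simp only [outScore_eq_card_filter, card_filter]
  exact (sum_add_sum_compl S _).symm

theorem IsStrong.sum_outScore_lt (hT : IsTournament r) (hS : IsStrong r)
    {S : Finset V} (hS₀ : S.Nonempty) (hS₁ : Sᶜ.Nonempty) :
    ∑ v ∈ S, outScore r v < (#S).choose 2 + #S * #Sᶜ := by
  simp only [outScore_eq_card_filter_add_card_filter_compl S, sum_add_distrib,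
    hT.sum_card_filter_eq_choose]
  exact Nat.add_lt_add_left (hS.sum_card_filter_compl_lt hT hS₀ hS₁) _

end

/-- For `n ≥ 8` and `k ∈ {0,1,2}`, every strong tournament on `n` vertices has
at most `2(k+1)` vertices of score at least `n - 2 - k`. -/
theorem stmt12 {V : Type*} [Fintype V] (n k : ℕ) (hn : 8 ≤ n) (hk : k ≤ 2)
    (r : V → V → Prop) (hT : IsTournament r) (hS : IsStrong r)
    (hcard : Fintype.card V = n) :
    {v : V | n - 2 - k ≤ outScore r v}.ncard ≤ 2 * (k + 1) := by
  classical
  by_contra! hmany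
  have hcard_high : 2 * k + 3 ≤ #{v | n - 2 - k ≤ outScore r v} := by
    rw [← Set.ncard_coe_finset, coe_filter_univ]
    omega
  obtain ⟨S, hS_high, hS_card⟩ := exists_subset_card_eq hcard_high
  have hlow : #S • (n - 2 - k) ≤ ∑ v ∈ S, outScore r v :=
    card_nsmul_le_sum S _ _ fun v hv => (mem_filter.1 (hS_high hv)).2
  have hhigh := hS.sum_outScore_lt hT (S := S) (card_pos.1 (by omega))
    (card_pos.1 (by rw [card_compl]; omega))
  rw [card_compl, hcard, hS_card, smul_eq_mul] at *
  -- `C(2k+3, 2) + (2k+3)(n-2k-3) = (2k+3)(n-2-k)`: the two bounds meet.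
  interval_cases k <;> norm_num [Nat.choose_two_right] at hlow hhigh <;> omega
end

section
/- Every tournament on n ≥ 1 vertices contains a Hamiltonian directed path (Rédei's theorem). -/
theorem IsTournament.rel_or_rel_of_ne {V : Type*} {r : V → V → Prop} (hT : IsTournament r)
    {u v : V} (huv : u ≠ v) : r u v ∨ r v u := by
  by_cases h : r v u
  · exact .inr h
  · exact .inl ((hT.2 u v huv).2 h)

namespace List

variable {α : Type*} {r : α → α → Prop} [DecidableRel r]

theorem isChain_orderedInsert {a : α} :
    ∀ {l : List α}, l.IsChain r → (∀ b ∈ l, r a b ∨ r b a) → (l.orderedInsert r a).IsChain r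
  | [], _, _ => isChain_singleton a
  | [b], _, hcmp => by
    by_cases hab : r a b
    · simp [hab]
    · simpa [hab] using (hcmp b (mem_singleton_self b)).resolve_left hab
  | b :: c :: l, hl, hcmp => by
    by_cases hab : r a b
    · simpa [hab] using IsChain.cons_cons hab hl
    have hba : r b a := (hcmp b mem_cons_self).resolve_left hab
    have ih := isChain_orderedInsert (l := c :: l) hl.tail
      fun d hd => hcmp d (mem_cons_of_mem b hd)
    rw [orderedInsert_cons, if_neg hab]
    by_cases hac : r a c
    · rw [orderedInsert_cons, if_pos hac] at ih ⊢
      exact ih.cons_cons hba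
    · rw [orderedInsert_cons, if_neg hac] at ih ⊢
      exact ih.cons_cons hl.rel

theorem isChain_insertionSort :
    ∀ {l : List α}, l.Pairwise (fun a b => r a b ∨ r b a) → (l.insertionSort r).IsChain r
  | [], _ => isChain_nil
  | a :: l, hl => by
    rw [pairwise_cons] at hl
    exact isChain_orderedInsert (isChain_insertionSort hl.2)
      fun b hb => hl.1 b ((perm_insertionSort r l).mem_iff.1 hb)

end List

theorem stmt16_general {V : Type*} [Fintype V] (r : V → V → Prop) (hT : IsTournament r) :
    ∃ l : List V, l.Nodup ∧ (∀ v : V, v ∈ l) ∧ l.Chain' r := by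
  classical
  have hperm := List.perm_insertionSort r (Finset.univ : Finset V).toList
  refine ⟨_, hperm.nodup_iff.2 (Finset.nodup_toList _), fun v => hperm.mem_iff.2 (by simp),
    List.isChain_insertionSort ?_⟩
  exact (Finset.nodup_toList _).pairwise_of_forall_ne fun a _ b _ hab => hT.rel_or_rel_of_ne hab

/-- Rédei's theorem: every tournament on `n ≥ 1` vertices has a Hamiltonian
directed path. -/
theorem stmt16 {V : Type*} [Fintype V] (r : V → V → Prop) (hT : IsTournament r)
    (hn : 1 ≤ Fintype.card V) :
    ∃ l : List V, l.Nodup ∧ (∀ v : V, v ∈ l) ∧ l.Chain' r :=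
  stmt16_general r hT
end

section
/- Let s ∈ S_n be a score sequence maximizing G(s) = Σ β^{s_v} (β > 1) over all non-decreasing sequences with 3 ≤ s_1 ≤ ... ≤ s_n ≤ n-4 satisfying Landau's inequalities, with n ≥ 11. If some index k with s_k = s_{k+1} satisfies s_1+...+s_k = C(k,2)+1, then s_{k+1} ≤ k-1, contradicting s_1+...+s_{k+1} ≥ C(k+1,2)+1; hence no value c with 3 < c < n-4 can appear more than once in s. -/
/-- Membership in `S_n`: non-decreasing integer sequences with entries between `3`
and `n-4`, satisfying Landau's strict inequalities and the total-sum condition. -/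
def MemS (n : ℕ) (s : Fin n → ℕ) : Prop :=
  Monotone s ∧ (∀ i : Fin n, 3 ≤ s i ∧ s i ≤ n - 4) ∧
  (∀ k : ℕ, 1 ≤ k → k ≤ n - 1 →
    k.choose 2 + 1 ≤ ∑ i : Fin n, if (i : ℕ) < k then s i else 0) ∧
  ((∑ i : Fin n, s i) = n.choose 2)

/-! If a value `c` with `3 < c < n - 4` occurred twice, let `i < j` be its first and last
occurrence and move one unit from `s i` to `s j`. The scores stay in `[3, n - 4]` and sorted, the
total is unchanged, and only the prefix sums of lengths in `(i, j]` drop, by one. Those prefixes end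
inside a block of equal scores, where Landau's inequality is strict: if a prefix of length `k ≤ j`
were tight, comparing with the prefix of length `k - 1` gives `c = s (k-1) ≤ k - 1`, and then the
prefix of length `k + 1` violates Landau's inequality (or, for `k + 1 = n`, forces
`s (n-1) = n - 2`). The new sequence is therefore in `S_n`, and strict convexity of `x ↦ β ^ x`
gives `β ^ (c-1) + β ^ (c+1) > 2 β ^ c`, contradicting maximality. -/

open Finset Function

lemma sum_add_sum_eq_sum_add_sum_of_eq_off {ι M : Type*} [Fintype ι] [DecidableEq ι]
    [AddCommMonoid M] (t : Finset ι) {f g : ι → M} (h : ∀ v ∉ t, f v = g v) :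
    ∑ v, f v + ∑ v ∈ t, g v = ∑ v, g v + ∑ v ∈ t, f v := by
  rw [← sum_add_sum_compl t f, ← sum_add_sum_compl t g,
    sum_congr rfl fun v hv => h v (mem_compl.1 hv)]
  abel

lemma two_mul_pow_lt_pow_add_pow {R : Type*} [CommRing R] [LinearOrder R]
    [IsStrictOrderedRing R] {β : R} (hβ : 0 < β) (hβ1 : β ≠ 1) (d : ℕ) :
    2 * β ^ (d + 1) < β ^ d + β ^ (d + 2) := by
  have h : 0 < β ^ d * (β - 1) ^ 2 :=
    mul_pos (pow_pos hβ d) (sq_pos_of_ne_zero (sub_ne_zero.2 hβ1))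
  linear_combination h

lemma sum_pow_lt_sum_pow_update_update {ι R : Type*} [Fintype ι] [DecidableEq ι] [CommRing R]
    [LinearOrder R] [IsStrictOrderedRing R] {β : R} (hβ : 1 < β) (f : ι → ℕ) {i j : ι}
    (hij : i ≠ j) {d : ℕ} (hi : f i = d + 1) (hj : f j = d + 1) :
    ∑ v, β ^ f v < ∑ v, β ^ update (update f i d) j (d + 2) v := by
  have h := sum_add_sum_eq_sum_add_sum_of_eq_off {i, j}
    (f := fun v => β ^ update (update f i d) j (d + 2) v) (g := fun v => β ^ f v)
    fun v hv => by
      simp only [mem_insert, mem_singleton, not_or] at hv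
      simp [update_of_ne hv.1, update_of_ne hv.2]
  simp only [sum_pair hij, update_self, update_of_ne hij, hi, hj] at h
  have := two_mul_pow_lt_pow_add_pow (zero_lt_one.trans hβ) hβ.ne' d
  linarith

lemma Set.Finite.exists_lt_subset_Icc {α : Type*} [LinearOrder α] {S : Set α} (hS : S.Finite)
    (h : 1 < S.ncard) : ∃ i ∈ S, ∃ j ∈ S, i < j ∧ S ⊆ Set.Icc i j := by
  rw [Set.ncard_eq_toFinset_card S hS] at h
  have hne : hS.toFinset.Nonempty := card_pos.1 (by omega)
  refine ⟨_, hS.mem_toFinset.1 (min'_mem _ hne), _, hS.mem_toFinset.1 (max'_mem _ hne),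
    min'_lt_max'_of_card _ h, fun v hv => ?_⟩
  exact ⟨min'_le _ _ (hS.mem_toFinset.2 hv), le_max' _ _ (hS.mem_toFinset.2 hv)⟩

lemma Nat.choose_two_succ (m : ℕ) : (m + 1).choose 2 = m.choose 2 + m := by
  rw [Nat.choose_succ_succ', Nat.choose_one_right, add_comm]

def prefixSum {M : Type*} [AddCommMonoid M] {n : ℕ} (s : Fin n → M) (k : ℕ) : M :=
  ∑ i : Fin n, if (i : ℕ) < k then s i else 0

section prefixSum

variable {M : Type*} [AddCommMonoid M] {n : ℕ} (s : Fin n → M)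

@[simp] lemma prefixSum_zero : prefixSum s 0 = 0 := by simp [prefixSum]

lemma prefixSum_succ {k : ℕ} (hk : k < n) :
    prefixSum s (k + 1) = prefixSum s k + s ⟨k, hk⟩ := by
  rw [prefixSum, prefixSum, ← Fintype.sum_ite_eq' (⟨k, hk⟩ : Fin n) s, ← sum_add_distrib]
  refine sum_congr rfl fun v _ => ?_
  simp only [Fin.ext_iff]
  split_ifs <;> first | omega | simp_all

lemma prefixSum_of_le {k : ℕ} (hk : n ≤ k) : prefixSum s k = ∑ i, s i :=
  sum_congr rfl fun v _ => if_pos (v.isLt.trans_le hk)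

lemma prefixSum_update_update {i j : Fin n} (hij : i ≠ j) (a b : M) (k : ℕ) :
    prefixSum (update (update s i a) j b) k
        + ((if (i : ℕ) < k then s i else 0) + (if (j : ℕ) < k then s j else 0))
      = prefixSum s k + ((if (i : ℕ) < k then a else 0) + (if (j : ℕ) < k then b else 0)) := by
  have h := sum_add_sum_eq_sum_add_sum_of_eq_off {i, j}
    (f := fun v => if (v : ℕ) < k then update (update s i a) j b v else 0)
    (g := fun v => if (v : ℕ) < k then s v else 0) fun v hv => by
      simp only [mem_insert, mem_singleton, not_or] at hv
      simp [update_of_ne hv.1, update_of_ne hv.2]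
  simpa [prefixSum, sum_pair hij, update_of_ne hij, hij.symm] using h

end prefixSum

namespace MemS

variable {n : ℕ} {s : Fin n → ℕ}

lemma choose_two_add_one_le_prefixSum (hs : MemS n s) {k : ℕ} (hk0 : 0 < k) (hk : k < n) :
    k.choose 2 + 1 ≤ prefixSum s k :=
  hs.2.2.1 k hk0 (by omega)

lemma prefixSum_self (hs : MemS n s) : prefixSum s n = n.choose 2 :=
  (prefixSum_of_le s le_rfl).trans hs.2.2.2

lemma le_of_prefixSum_succ_eq (hs : MemS n s) {m : ℕ} (hm : m < n)
    (htight : prefixSum s (m + 1) = (m + 1).choose 2 + 1) : s ⟨m, hm⟩ ≤ m := by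
  rw [prefixSum_succ s hm, Nat.choose_two_succ] at htight
  rcases Nat.eq_zero_or_pos m with rfl | hm0
  · have := (hs.2.1 ⟨0, hm⟩).1
    simp at htight
    omega
  · have := hs.choose_two_add_one_le_prefixSum hm0 hm
    omega

lemma choose_two_add_two_le_prefixSum (hs : MemS n s) {m : ℕ} (hm : m + 1 < n)
    (heq : s ⟨m, by omega⟩ = s ⟨m + 1, hm⟩) :
    (m + 1).choose 2 + 2 ≤ prefixSum s (m + 1) := by
  have hL := hs.choose_two_add_one_le_prefixSum (by omega : 0 < m + 1) (by omega)
  by_contra! hlt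
  have hle := hs.le_of_prefixSum_succ_eq (by omega) (by omega : prefixSum s (m + 1) = _)
  have hnext := prefixSum_succ s hm
  have hc := Nat.choose_two_succ (m + 1)
  have hbound := hs.2.1 ⟨m + 1, hm⟩
  rcases Nat.lt_or_ge (m + 1 + 1) n with hlt | hge
  · have := hs.choose_two_add_one_le_prefixSum (by omega : 0 < m + 1 + 1) hlt
    omega
  · obtain rfl : n = m + 1 + 1 := by omega
    have := hs.prefixSum_self
    omega

lemma update_sub_one_update_add_one (hs : MemS n s) {i j : Fin n} (hij : i < j)
    (hsij : s i = s j) (hfirst : ∀ v, s v = s i → i ≤ v)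
    (hlast : ∀ v, s v = s j → v ≤ j)
    (hlow : 3 < s i) (hhigh : s j < n - 4) :
    MemS n (update (update s i (s i - 1)) j (s j + 1)) := by
  have hmid : ∀ v : Fin n, (i : ℕ) ≤ v → (v : ℕ) ≤ j → s v = s i := fun v hiv hvj =>
    le_antisymm (hsij ▸ hs.1 (Fin.le_def.2 hvj)) (hs.1 (Fin.le_def.2 hiv))
  have hprefix := prefixSum_update_update s hij.ne (s i - 1) (s j + 1)
  refine ⟨?_, fun v => ?_, fun k hk0 hkn => ?_, ?_⟩
  · intro a b hab
    have hbefore : a < i → s a < s i := fun ha =>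
      (hs.1 ha.le).lt_of_ne fun h => (hfirst a h).not_gt ha
    have hafter : j < b → s j < s b := fun hb =>
      (hs.1 hb.le).lt_of_ne fun h => (hlast b h.symm).not_gt hb
    have hmono := hs.1 hab
    simp only [update_apply]
    split_ifs <;> grind
  · have := hs.2.1 v
    simp only [update_apply]
    split_ifs <;> omega
  · show k.choose 2 + 1 ≤ prefixSum _ k
    have hL := hs.choose_two_add_one_le_prefixSum hk0 (by omega)
    have hshift := hprefix k
    by_cases hk : (i : ℕ) < k ∧ k ≤ j
    · obtain ⟨m, rfl⟩ : ∃ m, k = m + 1 := ⟨k - 1, by omega⟩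
      have hm : m + 1 < n := by omega
      have hstrict := hs.choose_two_add_two_le_prefixSum hm
        ((hmid _ (by simp; omega) (by simp; omega)).trans
          (hmid _ (by simp; omega) (by simp; omega)).symm)
      split_ifs at hshift <;> omega
    · split_ifs at hshift <;> omega
  · have htotal := hprefix n
    rw [prefixSum_of_le _ le_rfl, prefixSum_of_le _ le_rfl] at htotal
    simp only [i.isLt, j.isLt, if_true] at htotal
    have hsum := hs.2.2.2
    omega

end MemS

theorem stmt18_general (n : ℕ) (β : ℝ) (hβ : 1 < β)
    (s : Fin n → ℕ) (hs : MemS n s)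
    (hmax : ∀ s' : Fin n → ℕ, MemS n s' →
      (∑ i : Fin n, β ^ (s' i)) ≤ ∑ i : Fin n, β ^ (s i)) :
    ∀ c : ℕ, 3 < c → c < n - 4 → ({i : Fin n | s i = c}).ncard ≤ 1 := by
  intro c hc3 hcn
  by_contra! hcard
  obtain ⟨i, hi : s i = c, j, hj : s j = c, hij, hblock⟩ :=
    (Set.toFinite _).exists_lt_subset_Icc hcard
  obtain ⟨d, rfl⟩ : ∃ d, c = d + 1 := ⟨c - 1, by omega⟩
  have hmem := hs.update_sub_one_update_add_one hij (hi.trans hj.symm)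
    (fun v hv => (hblock (hv.trans hi)).1) (fun v hv => (hblock (hv.trans hj)).2)
    (by omega) (by omega)
  rw [hi, hj, Nat.add_sub_cancel] at hmem
  exact (hmax _ hmem).not_gt (sum_pow_lt_sum_pow_update_update hβ s hij.ne hi hj)

/-- A maximizer of `G(s) = Σ β^(s_v)` (with `β > 1`) over `S_n`, `n ≥ 11`, has no
repeated value strictly between `3` and `n - 4`. -/
theorem stmt18 (n : ℕ) (hn : 11 ≤ n) (β : ℝ) (hβ : 1 < β)
    (s : Fin n → ℕ) (hs : MemS n s)
    (hmax : ∀ s' : Fin n → ℕ, MemS n s' →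
      (∑ i : Fin n, β ^ (s' i)) ≤ ∑ i : Fin n, β ^ (s i)) :
    ∀ c : ℕ, 3 < c → c < n - 4 → ({i : Fin n | s i = c}).ncard ≤ 1 :=
  stmt18_general n β hβ s hs hmax
end
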